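/- arXiv:2106.11273 — 3 statements merged into one kernel-verified Lean document; each statement's English description precedes it below -/
import Mathlib

section
/- Suppose h^↓ > 0, Δb↑ ≥ 0, ξ = h^↓/Δb↑ (with ξ = +∞ if Δb↑ = 0), G > 0, ξ_C = 1 + 1/G, γ = 0 for ξ ≤ 1, γ = G(ξ−1) for 1 ≤ ξ ≤ ξ_C, γ = 1 for ξ ≥ ξ_C. Let h^η satisfy h^↓ − Δb↑ ≤ h^η ≤ h^↑ + Δb↑ and h^h satisfy h^↓ ≤ h^h ≤ h^↑, where 0 ≤ h^↓ ≤ h^↑. Then the convex combination h = (1−γ)h^h + γ·h^η satisfies (1 − 1/ξ_C)·h^↓ ≤ h ≤ h^↑ + h^↓/ξ_C. -/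
/-! The weight satisfies `0 ≤ γ ≤ 1` and `γ ≤ ξ / ξ_C`: its ramp `G (ξ - 1)` is the chord from
`(1, 0)` to `(ξ_C, 1)`, which lies below the line `ξ ↦ ξ / ξ_C` through the origin and `(ξ_C, 1)`.
Multiplying by `Δb` gives `γ Δb ≤ h↓ / ξ_C`, and a convex combination with weight `γ` of a value
within `[h↓, h↑]` and one within `Δb` of that interval stays within `γ Δb` of it. -/

section ConvexCombination

variable {R : Type*} [CommRing R] [PartialOrder R] [IsOrderedRing R] {γ x y a b d : R}

theorem sub_mul_le_convexComb (hγ₀ : 0 ≤ γ) (hγ₁ : γ ≤ 1) (hx : a ≤ x) (hy : a - d ≤ y) :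
    a - γ * d ≤ (1 - γ) * x + γ * y :=
  calc a - γ * d = (1 - γ) * a + γ * (a - d) := by ring
    _ ≤ (1 - γ) * x + γ * y :=
      add_le_add (mul_le_mul_of_nonneg_left hx (sub_nonneg.2 hγ₁))
        (mul_le_mul_of_nonneg_left hy hγ₀)

theorem convexComb_le_add_mul (hγ₀ : 0 ≤ γ) (hγ₁ : γ ≤ 1) (hx : x ≤ b) (hy : y ≤ b + d) :
    (1 - γ) * x + γ * y ≤ b + γ * d :=
  calc (1 - γ) * x + γ * y ≤ (1 - γ) * b + γ * (b + d) :=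
      add_le_add (mul_le_mul_of_nonneg_left hx (sub_nonneg.2 hγ₁))
        (mul_le_mul_of_nonneg_left hy hγ₀)
    _ = b + γ * d := by ring

end ConvexCombination

theorem ramp_weight_mem_Icc_and_le_div {G ξ γ : ℝ} (hG : 0 < G) (hξ : 0 ≤ ξ)
    (h₁ : ξ ≤ 1 → γ = 0) (h₂ : 1 ≤ ξ → ξ ≤ 1 + 1 / G → γ = G * (ξ - 1))
    (h₃ : 1 + 1 / G ≤ ξ → γ = 1) :
    γ ∈ Set.Icc 0 1 ∧ γ ≤ ξ / (1 + 1 / G) := by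
  have hC : 1 + 1 / G = (G + 1) / G := by field_simp
  rcases le_total ξ 1 with hle | hge
  · rw [h₁ hle]
    exact ⟨⟨le_rfl, zero_le_one⟩, by positivity⟩
  rcases le_total ξ (1 + 1 / G) with hle' | hge'
  · rw [h₂ hge hle']
    rw [hC, le_div_iff₀ (by positivity)] at hle'
    rw [hC, div_div_eq_mul_div, le_div_iff₀ (by positivity)]
    exact ⟨⟨by nlinarith, by nlinarith⟩, by nlinarith⟩
  · rw [h₃ hge']
    exact ⟨⟨zero_le_one, le_rfl⟩, (one_le_div (by positivity)).2 hge'⟩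

theorem weight_mem_Icc_and_mul_le {hdown Δb G γ : ℝ} (hdown_nonneg : 0 ≤ hdown) (hΔb : 0 ≤ Δb)
    (hG : 0 < G) (hγ0 : Δb = 0 → γ = 1)
    (hγpos : 0 < Δb →
      ((hdown / Δb ≤ 1 → γ = 0) ∧
       (1 ≤ hdown / Δb → hdown / Δb ≤ 1 + 1 / G → γ = G * (hdown / Δb - 1)) ∧
       (1 + 1 / G ≤ hdown / Δb → γ = 1))) :
    γ ∈ Set.Icc 0 1 ∧ γ * Δb ≤ hdown / (1 + 1 / G) := by
  rcases hΔb.eq_or_lt with hzero | hpos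
  · rw [hγ0 hzero.symm, ← hzero, mul_zero]
    exact ⟨⟨zero_le_one, le_rfl⟩, by positivity⟩
  obtain ⟨h₁, h₂, h₃⟩ := hγpos hpos
  obtain ⟨hγ, hγξ⟩ := ramp_weight_mem_Icc_and_le_div hG (by positivity) h₁ h₂ h₃
  refine ⟨hγ, ?_⟩
  calc γ * Δb ≤ hdown / Δb / (1 + 1 / G) * Δb := mul_le_mul_of_nonneg_right hγξ hΔb
    _ = hdown / (1 + 1 / G) := by field_simp

theorem stmt_11_general (hdown hup Δb G γ hh hη : ℝ)
    (hdown_pos : 0 < hdown) (hΔb : 0 ≤ Δb) (hG : 0 < G)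
    (hγ0 : Δb = 0 → γ = 1)
    (hγpos : 0 < Δb →
      ((hdown / Δb ≤ 1 → γ = 0) ∧
       (1 ≤ hdown / Δb → hdown / Δb ≤ 1 + 1 / G → γ = G * (hdown / Δb - 1)) ∧
       (1 + 1 / G ≤ hdown / Δb → γ = 1)))
    (hhh : hdown ≤ hh) (hhh' : hh ≤ hup)
    (hhη : hdown - Δb ≤ hη) (hhη' : hη ≤ hup + Δb) :
    (1 - 1 / (1 + 1 / G)) * hdown ≤ (1 - γ) * hh + γ * hη ∧
    (1 - γ) * hh + γ * hη ≤ hup + hdown / (1 + 1 / G) := by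
  obtain ⟨⟨hγ₀, hγ₁⟩, hγΔb⟩ := weight_mem_Icc_and_mul_le hdown_pos.le hΔb hG hγ0 hγpos
  constructor
  · calc (1 - 1 / (1 + 1 / G)) * hdown = hdown - hdown / (1 + 1 / G) := by ring
      _ ≤ hdown - γ * Δb := by gcongr
      _ ≤ (1 - γ) * hh + γ * hη := sub_mul_le_convexComb hγ₀ hγ₁ hhh hhη
  · calc (1 - γ) * hh + γ * hη ≤ hup + γ * Δb := convexComb_le_add_mul hγ₀ hγ₁ hhh' hhη'
      _ ≤ hup + hdown / (1 + 1 / G) := by gcongr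

theorem stmt_11 (hdown hup Δb G γ hh hη : ℝ)
    (hdown_pos : 0 < hdown) (hΔb : 0 ≤ Δb) (hG : 0 < G)
    (hle : hdown ≤ hup)
    (hγ0 : Δb = 0 → γ = 1)
    (hγpos : 0 < Δb →
      ((hdown / Δb ≤ 1 → γ = 0) ∧
       (1 ≤ hdown / Δb → hdown / Δb ≤ 1 + 1 / G → γ = G * (hdown / Δb - 1)) ∧
       (1 + 1 / G ≤ hdown / Δb → γ = 1)))
    (hhh : hdown ≤ hh) (hhh' : hh ≤ hup)
    (hhη : hdown - Δb ≤ hη) (hhη' : hη ≤ hup + Δb) :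
    (1 - 1 / (1 + 1 / G)) * hdown ≤ (1 - γ) * hh + γ * hη ∧
    (1 - γ) * hh + γ * hη ≤ hup + hdown / (1 + 1 / G) :=
  stmt_11_general hdown hup Δb G γ hh hη hdown_pos hΔb hG hγ0 hγpos hhh hhh' hhη hhη'
end

section
/- Let h_{j−1}, h_j, h_{j+1} > 0 be depths, u_{j−1}, u_j, u_{j+1} reals, q_i = u_i·h_i the fluxes, K⁺, K⁻ > 0, α⁻ ∈ [0,1], and κ = min(1, K⁺·h_j/h_{j−1}, K⁻·h_j/h_{j+1}). If q⁻ is any real with |q⁻ − q_j| ≤ κ·α⁻·|q_{j+1} − q_j| and sign(q⁻ − q_j) = sign(q_{j+1} − q_j) or q⁻ = q_j, then |q⁻| ≤ h_j·(|u_j| + K⁻·α⁻·|u_{j+1}|). -/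
/-!
The sign condition and the bound on `|q⁻ - q_j|` say that `q⁻ = q_j + t (q_{j+1} - q_j)`
with `0 ≤ t ≤ κ α⁻ ≤ 1`, so `q⁻` is a convex combination of `q_j` and `q_{j+1}` and
`|q⁻| ≤ |q_j| + t |q_{j+1}| ≤ |q_j| + κ α⁻ h_{j+1} |u_{j+1}|`.
The suppression factor is built so that `κ h_{j+1} ≤ K⁻ h_j`, which turns the last term into
`K⁻ α⁻ h_j |u_{j+1}|`.
-/

theorem Real.mul_nonneg_of_sign_eq {x y : ℝ} (h : Real.sign x = Real.sign y) : 0 ≤ x * y := by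
  rcases lt_trichotomy x 0 with hx | rfl | hx
  · rcases lt_trichotomy y 0 with hy | rfl | hy
    · exact (mul_pos_of_neg_of_neg hx hy).le
    · simp
    · rw [Real.sign_of_neg hx, Real.sign_of_pos hy] at h; norm_num at h
  · simp
  · rcases lt_trichotomy y 0 with hy | rfl | hy
    · rw [Real.sign_of_pos hx, Real.sign_of_neg hy] at h; norm_num at h
    · simp
    · exact (mul_pos hx hy).le

theorem exists_eq_add_mul_sub_of_abs_sub_le {a b c l : ℝ} (hl : 0 ≤ l)
    (hsame : 0 ≤ (c - a) * (b - a)) (habs : |c - a| ≤ l * |b - a|) :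
    ∃ t, 0 ≤ t ∧ t ≤ l ∧ c = a + t * (b - a) := by
  rcases eq_or_ne b a with rfl | hba
  · exact ⟨0, le_rfl, hl, by simpa [sub_eq_zero] using habs⟩
  have hd : b - a ≠ 0 := sub_ne_zero.mpr hba
  refine ⟨(c - a) / (b - a), ?_, ?_, by field_simp; ring⟩
  · rw [← mul_div_mul_right (c - a) (b - a) hd]
    exact div_nonneg hsame (mul_self_nonneg _)
  · calc (c - a) / (b - a) ≤ |(c - a) / (b - a)| := le_abs_self _
      _ = |c - a| / |b - a| := abs_div _ _
      _ ≤ l := (div_le_iff₀ (abs_pos.mpr hd)).mpr habs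

theorem abs_add_mul_sub_le {a b t : ℝ} (ht₀ : 0 ≤ t) (ht₁ : t ≤ 1) :
    |a + t * (b - a)| ≤ |a| + t * |b| := by
  calc |a + t * (b - a)| = |(1 - t) * a + t * b| := by ring_nf
    _ ≤ |(1 - t) * a| + |t * b| := abs_add_le _ _
    _ = (1 - t) * |a| + t * |b| := by
        rw [abs_mul, abs_mul, abs_of_nonneg (sub_nonneg.mpr ht₁), abs_of_nonneg ht₀]
    _ ≤ |a| + t * |b| := by nlinarith [abs_nonneg a]

theorem abs_le_of_abs_sub_le_of_sign_eq {a b c l : ℝ} (hl₀ : 0 ≤ l) (hl₁ : l ≤ 1)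
    (habs : |c - a| ≤ l * |b - a|) (hsgn : Real.sign (c - a) = Real.sign (b - a) ∨ c = a) :
    |c| ≤ |a| + l * |b| := by
  have hsame : 0 ≤ (c - a) * (b - a) := by
    rcases hsgn with h | rfl
    · exact Real.mul_nonneg_of_sign_eq h
    · simp
  obtain ⟨t, ht₀, htl, rfl⟩ := exists_eq_add_mul_sub_of_abs_sub_le hl₀ hsame habs
  calc |a + t * (b - a)| ≤ |a| + t * |b| := abs_add_mul_sub_le ht₀ (htl.trans hl₁)
    _ ≤ |a| + l * |b| := by gcongr

section Suppression

variable {Kp Km hjm hj hjp : ℝ}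

theorem suppression_nonneg (hhm : 0 < hjm) (hhj : 0 < hj) (hhp : 0 < hjp)
    (hKp : 0 < Kp) (hKm : 0 < Km) :
    0 ≤ min 1 (min (Kp * hj / hjm) (Km * hj / hjp)) :=
  le_min zero_le_one (le_min (by positivity) (by positivity))

theorem suppression_mul_le (hhp : 0 < hjp) :
    min 1 (min (Kp * hj / hjm) (Km * hj / hjp)) * hjp ≤ Km * hj :=
  (le_div_iff₀ hhp).mp ((min_le_right _ _).trans (min_le_right _ _))

end Suppression

theorem stmt_12_general (hjm hj hjp uj ujp Kp Km αm qminus : ℝ)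
    (hhm : 0 < hjm) (hhj : 0 < hj) (hhp : 0 < hjp)
    (hKp : 0 < Kp) (hKm : 0 < Km) (hαm : 0 ≤ αm) (hαm1 : αm ≤ 1)
    (qj : ℝ) (qjp : ℝ) (hqj : qj = uj * hj) (hqjp : qjp = ujp * hjp)
    (κ : ℝ) (hκ : κ = min 1 (min (Kp * hj / hjm) (Km * hj / hjp)))
    (habs : |qminus - qj| ≤ κ * αm * |qjp - qj|)
    (hsgn : Real.sign (qminus - qj) = Real.sign (qjp - qj) ∨ qminus = qj) :
    |qminus| ≤ hj * (|uj| + Km * αm * |ujp|) := by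
  have hκ₀ : 0 ≤ κ := hκ ▸ suppression_nonneg hhm hhj hhp hKp hKm
  have hκ₁ : κ ≤ 1 := hκ ▸ min_le_left _ _
  have hκhp : κ * hjp ≤ Km * hj := hκ ▸ suppression_mul_le hhp
  have hκα₁ : κ * αm ≤ 1 := by nlinarith
  calc |qminus| ≤ |qj| + κ * αm * |qjp| :=
        abs_le_of_abs_sub_le_of_sign_eq (mul_nonneg hκ₀ hαm) hκα₁ habs hsgn
    _ = hj * |uj| + (κ * hjp) * αm * |ujp| := by
        rw [hqj, hqjp, abs_mul, abs_mul, abs_of_pos hhj, abs_of_pos hhp]; ring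
    _ ≤ hj * |uj| + (Km * hj) * αm * |ujp| := by gcongr
    _ = hj * (|uj| + Km * αm * |ujp|) := by ring

theorem stmt_12 (hjm hj hjp ujm uj ujp Kp Km αm qminus : ℝ)
    (hhm : 0 < hjm) (hhj : 0 < hj) (hhp : 0 < hjp)
    (hKp : 0 < Kp) (hKm : 0 < Km) (hαm : 0 ≤ αm) (hαm1 : αm ≤ 1)
    (qj : ℝ) (qjp : ℝ) (hqj : qj = uj * hj) (hqjp : qjp = ujp * hjp)
    (κ : ℝ) (hκ : κ = min 1 (min (Kp * hj / hjm) (Km * hj / hjp)))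
    (habs : |qminus - qj| ≤ κ * αm * |qjp - qj|)
    (hsgn : Real.sign (qminus - qj) = Real.sign (qjp - qj) ∨ qminus = qj) :
    |qminus| ≤ hj * (|uj| + Km * αm * |ujp|) :=
  stmt_12_general hjm hj hjp uj ujp Kp Km αm qminus hhm hhj hhp hKp hKm hαm hαm1 qj qjp hqj hqjp κ
    hκ habs hsgn
end

section
/- Let a₁, a₂ ∈ [−1, 1] and define f_q(x) = 1 − a₁a₂/3 + (a₁ + a₂)x + a₁a₂x² on [−1, 1] (the quadratic product reconstruction with corrected mean). If |a₁| ≤ α and |a₂| ≤ α with α ≤ (3 − √3)/2, then f_q(x) ≥ 0 for all x ∈ [−1, 1]. Conversely, if α > (3 − √3)/2 there exist a₁, a₂ with |a₁|, |a₂| ≤ α and x ∈ [−1,1] with f_q(x) < 0. -/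
/-!
Write `f_q(x) = (1 + a₁x)(1 + a₂x) - a₁a₂/3`. If `a₁a₂ ≤ 0` both factors are nonnegative on
`[-1, 1]`, so `f_q ≥ 0`. If `a₁, a₂ ≥ 0` (the case `a₁, a₂ ≤ 0` is its mirror image under
`x ↦ -x`), then `a₁ + a₂ ≥ 2a₁a₂` makes `f_q` nondecreasing on `[-1, 1]`, so its minimum is
`f_q(-1) = 1 - a₁ - a₂ + 2a₁a₂/3`; this is decreasing in each `aᵢ ≤ 3/2`, hence at least its value
`1 - 2α + 2α²/3 = (2/3)(α - (3 - √3)/2)(α - (3 + √3)/2)` at `a₁ = a₂ = α`, which is `≥ 0` exactly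
when `α ≤ (3 - √3)/2` (for `α ≤ 1`). For `α` just above the threshold, `a₁ = a₂ = min α 1`,
`x = -1` gives a negative value.
-/

open Real Set

noncomputable def fq (a₁ a₂ x : ℝ) : ℝ := 1 - a₁ * a₂ / 3 + (a₁ + a₂) * x + a₁ * a₂ * x ^ 2

lemma one_lt_sqrt_three : 1 < √3 := (lt_sqrt zero_le_one).2 (by norm_num)

lemma sqrt_three_lt_three : √3 < 3 := (sqrt_lt' (by norm_num)).2 (by norm_num)

lemma fq_eq_mul_sub (a₁ a₂ x : ℝ) : fq a₁ a₂ x = (1 + a₁ * x) * (1 + a₂ * x) - a₁ * a₂ / 3 := by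
  unfold fq; ring

lemma fq_neg (a₁ a₂ x : ℝ) : fq (-a₁) (-a₂) (-x) = fq a₁ a₂ x := by
  unfold fq; ring

lemma fq_self_neg_one (α : ℝ) :
    fq α α (-1) = 2 / 3 * (α - (3 - √3) / 2) * (α - (3 + √3) / 2) := by
  have h := sq_sqrt (zero_le_three : (0 : ℝ) ≤ 3)
  unfold fq
  linear_combination (1 / 6 : ℝ) * h

lemma fq_self_neg_one_nonneg {α : ℝ} (hα : α ≤ (3 - √3) / 2) : 0 ≤ fq α α (-1) := by
  rw [fq_self_neg_one]
  exact mul_nonneg_of_nonpos_of_nonpos (by linarith) (by linarith [sqrt_nonneg 3])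

lemma fq_self_neg_one_neg {α : ℝ} (hlo : (3 - √3) / 2 < α) (hhi : α < (3 + √3) / 2) :
    fq α α (-1) < 0 := by
  rw [fq_self_neg_one]
  exact mul_neg_of_pos_of_neg (by linarith) (by linarith)

lemma one_add_mul_nonneg {a x : ℝ} (ha : a ∈ Icc (-1) 1) (hx : x ∈ Icc (-1) 1) :
    0 ≤ 1 + a * x := by
  have h : |a * x| ≤ 1 := by
    rw [abs_mul]
    exact mul_le_one₀ (abs_le.2 ha) (abs_nonneg x) (abs_le.2 hx)
  linarith [neg_abs_le (a * x)]

lemma fq_nonneg_of_mul_nonpos {a₁ a₂ x : ℝ} (h : a₁ * a₂ ≤ 0) (h₁ : a₁ ∈ Icc (-1) 1)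
    (h₂ : a₂ ∈ Icc (-1) 1) (hx : x ∈ Icc (-1) 1) : 0 ≤ fq a₁ a₂ x := by
  rw [fq_eq_mul_sub]
  linarith [mul_nonneg (one_add_mul_nonneg h₁ hx) (one_add_mul_nonneg h₂ hx)]

lemma fq_neg_one_le {a₁ a₂ x : ℝ} (h₁ : a₁ ∈ Icc 0 1) (h₂ : a₂ ∈ Icc 0 1) (hx : -1 ≤ x) :
    fq a₁ a₂ (-1) ≤ fq a₁ a₂ x := by
  have hslope : 0 ≤ a₁ + a₂ - 2 * (a₁ * a₂) := by
    linarith [mul_nonneg h₁.1 (sub_nonneg.2 h₂.2), mul_nonneg h₂.1 (sub_nonneg.2 h₁.2)]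
  have hdiff : fq a₁ a₂ x - fq a₁ a₂ (-1)
      = (x + 1) * (a₁ + a₂ - 2 * (a₁ * a₂)) + a₁ * a₂ * (x + 1) ^ 2 := by
    unfold fq; ring
  have hquad : 0 ≤ a₁ * a₂ * (x + 1) ^ 2 := mul_nonneg (mul_nonneg h₁.1 h₂.1) (sq_nonneg _)
  linarith [mul_nonneg (by linarith : 0 ≤ x + 1) hslope]

lemma fq_self_neg_one_le {a₁ a₂ α : ℝ} (hα : α ≤ 3 / 2) (h₁ : a₁ ≤ α) (h₂ : a₂ ≤ α) :
    fq α α (-1) ≤ fq a₁ a₂ (-1) := by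
  have hdiff : fq a₁ a₂ (-1) - fq α α (-1)
      = ((α - a₁) + (α - a₂)) * (1 - 2 * α / 3) + 2 / 3 * ((α - a₁) * (α - a₂)) := by
    unfold fq; ring
  have hlin : 0 ≤ ((α - a₁) + (α - a₂)) * (1 - 2 * α / 3) :=
    mul_nonneg (by linarith) (by linarith)
  have hprod : 0 ≤ (α - a₁) * (α - a₂) := mul_nonneg (by linarith) (by linarith)
  linarith

lemma fq_nonneg_of_nonneg {a₁ a₂ α x : ℝ} (h₁ : 0 ≤ a₁) (h₂ : 0 ≤ a₂) (h₁α : a₁ ≤ α)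
    (h₂α : a₂ ≤ α) (hα : α ≤ (3 - √3) / 2) (hx : -1 ≤ x) : 0 ≤ fq a₁ a₂ x := by
  have hα₁ : α ≤ 1 := by linarith [one_lt_sqrt_three]
  calc 0 ≤ fq α α (-1) := fq_self_neg_one_nonneg hα
    _ ≤ fq a₁ a₂ (-1) := fq_self_neg_one_le (by linarith) h₁α h₂α
    _ ≤ fq a₁ a₂ x := fq_neg_one_le ⟨h₁, by linarith⟩ ⟨h₂, by linarith⟩ hx

lemma fq_nonneg {a₁ a₂ x : ℝ} (α : ℝ) (h₁ : a₁ ∈ Icc (-1) 1) (h₂ : a₂ ∈ Icc (-1) 1)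
    (h₁α : |a₁| ≤ α) (h₂α : |a₂| ≤ α) (hα : α ≤ (3 - √3) / 2) (hx : x ∈ Icc (-1) 1) :
    0 ≤ fq a₁ a₂ x := by
  rcases le_total 0 a₁ with ha₁ | ha₁ <;> rcases le_total 0 a₂ with ha₂ | ha₂
  · exact fq_nonneg_of_nonneg ha₁ ha₂ (le_of_abs_le h₁α) (le_of_abs_le h₂α) hα hx.1
  · exact fq_nonneg_of_mul_nonpos (mul_nonpos_of_nonneg_of_nonpos ha₁ ha₂) h₁ h₂ hx
  · exact fq_nonneg_of_mul_nonpos (mul_nonpos_of_nonpos_of_nonneg ha₁ ha₂) h₁ h₂ hx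
  · rw [← fq_neg]
    exact fq_nonneg_of_nonneg (neg_nonneg.2 ha₁) (neg_nonneg.2 ha₂)
      ((neg_le_abs a₁).trans h₁α) ((neg_le_abs a₂).trans h₂α) hα (neg_le_neg hx.2)

theorem stmt_13 :
    (∀ a₁ a₂ α : ℝ, a₁ ∈ Set.Icc (-1 : ℝ) 1 → a₂ ∈ Set.Icc (-1 : ℝ) 1 →
      |a₁| ≤ α → |a₂| ≤ α → α ≤ (3 - Real.sqrt 3) / 2 →
      ∀ x ∈ Set.Icc (-1 : ℝ) 1,
        0 ≤ 1 - a₁ * a₂ / 3 + (a₁ + a₂) * x + a₁ * a₂ * x ^ 2) ∧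
    (∀ α : ℝ, (3 - Real.sqrt 3) / 2 < α →
      ∃ a₁ a₂ x : ℝ, a₁ ∈ Set.Icc (-1 : ℝ) 1 ∧ a₂ ∈ Set.Icc (-1 : ℝ) 1 ∧
        |a₁| ≤ α ∧ |a₂| ≤ α ∧ x ∈ Set.Icc (-1 : ℝ) 1 ∧
        1 - a₁ * a₂ / 3 + (a₁ + a₂) * x + a₁ * a₂ * x ^ 2 < 0) := by
  refine ⟨fun a₁ a₂ α h₁ h₂ h₁α h₂α hα x hx => fq_nonneg α h₁ h₂ h₁α h₂α hα hx,
    fun α hα => ?_⟩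
  have hc₀ : 0 < (3 - √3) / 2 := by linarith [sqrt_three_lt_three]
  have hc₁ : (3 - √3) / 2 < 1 := by linarith [one_lt_sqrt_three]
  have ht : (3 - √3) / 2 < min α 1 := lt_min hα hc₁
  have ht₁ : min α 1 ≤ 1 := min_le_right α 1
  have htα : |min α 1| ≤ α := (abs_of_pos (hc₀.trans ht)).trans_le (min_le_left α 1)
  exact ⟨min α 1, min α 1, -1, ⟨by linarith, ht₁⟩, ⟨by linarith, ht₁⟩, htα, htα,
    ⟨le_rfl, by norm_num⟩, fq_self_neg_one_neg ht (by linarith [one_lt_sqrt_three])⟩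
end
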